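/- Let r ≥ 1 and a ≥ 1 be integers. Then |GL_r(ℤ/aℤ)| = φ(a) · a^(r²−1) · ∏_{p prime, p ∣ a} ∏_{i=2}^{r} (1 − p^(−i)), where φ is Euler's totient function, the equality is an equality of rational numbers, and the outer product runs over the distinct prime divisors of a. Equivalently, since the subgroup of scalar matrices of GL_r(ℤ/aℤ) has order φ(a), the quotient PGL_r(ℤ/aℤ) of GL_r(ℤ/aℤ) by its scalar matrices has order a^(r²−1) · ∏_{p ∣ a} ∏_{i=2}^{r} (1 − p^(−i)). -/

import Mathlib

/-- The subgroup of scalar matrices `{λ·I : λ ∈ Rˣ}` inside `GL n R`. -/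
def scalarSubgroup (n : Type*) [DecidableEq n] [Fintype n] (R : Type*) [CommRing R] :
    Subgroup (Matrix.GeneralLinearGroup n R) :=
  (Units.map (Matrix.scalar n).toMonoidHom).range

/-!
For a surjective local ring map `f : R →+* S` the units map `Rˣ → Sˣ` is onto, and `u ↦ u - 1`
identifies its kernel `1 + ker f` with `ker f`; hence `|Rˣ| / |R| = |Sˣ| / |S|`. Applied to the
reduction `M_r(ℤ/p^k) → M_r(𝔽_p)` this reduces prime powers to the count
`|GL_r(𝔽_p)| = ∏_{i<r} (p^r - p^i)`, and the Chinese remainder theorem makes `|GL_r(ℤ/aℤ)|`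
multiplicative in `a`. The scalar matrices form a copy of `(ℤ/aℤ)ˣ`, of order
`φ(a) = a ∏_{p ∣ a} (1 - p⁻¹)`, and Lagrange's theorem gives the order of `PGL_r(ℤ/aℤ)`.
-/

open Matrix Finset

theorem card_units_mul_card_eq_of_surjective {R S : Type*} [Ring R] [Ring S] (f : R →+* S)
    (hf : Function.Surjective f) [IsLocalHom f] :
    Nat.card Rˣ * Nat.card S = Nat.card Sˣ * Nat.card R := by
  set φ : Rˣ →* Sˣ := Units.map f.toMonoidHom
  have hφ : Function.Surjective φ :=
    IsLocalRing.surjective_units_map_of_local_ringHom f hf inferInstance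
  have hunit (x : R) (hx : f x = 0) : IsUnit (1 + x) :=
    isUnit_of_map_unit f _ (by simp [hx])
  have hker : φ.ker ≃ f.toAddMonoidHom.ker :=
    { toFun u := ⟨u.1.1 - 1, by
        have := congrArg Units.val ((MonoidHom.mem_ker).1 u.2)
        simpa [sub_eq_zero, φ] using this⟩
      invFun x := ⟨(hunit x.1 x.2).unit, by
        rw [MonoidHom.mem_ker]; ext; simpa [φ] using x.2⟩
      left_inv u := by ext; simp
      right_inv x := by ext; simp }
  have hR := AddSubgroup.card_eq_card_quotient_mul_card_addSubgroup f.toAddMonoidHom.ker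
  have hRu := Subgroup.card_eq_card_quotient_mul_card_subgroup φ.ker
  rw [Nat.card_congr (QuotientAddGroup.quotientKerEquivOfSurjective _ hf).toEquiv] at hR
  rw [Nat.card_congr (QuotientGroup.quotientKerEquivOfSurjective _ hφ).toEquiv,
    Nat.card_congr hker] at hRu
  rw [hR, hRu]
  ring

instance RingHom.isLocalHom_mapMatrix {n R S : Type*} [Fintype n] [DecidableEq n] [CommRing R]
    [CommRing S] (f : R →+* S) [IsLocalHom f] :
    IsLocalHom (f.mapMatrix : Matrix n n R →+* Matrix n n S) where
  map_nonunit M hM := by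
    rw [isUnit_iff_isUnit_det] at hM ⊢
    rw [← RingHom.map_det] at hM
    exact isUnit_of_map_unit f _ hM

theorem ZMod.isLocalHom_castHom_primePow {p k : ℕ} (hp : p.Prime) (hk : k ≠ 0) :
    IsLocalHom (ZMod.castHom (dvd_pow_self p hk) (ZMod p)) where
  map_nonunit x hx := by
    have : NeZero (p ^ k) := ⟨pow_ne_zero _ hp.ne_zero⟩
    obtain ⟨m, rfl⟩ := ZMod.natCast_zmod_surjective x
    rw [map_natCast, ZMod.isUnit_iff_coprime] at hx
    rwa [ZMod.isUnit_iff_coprime, Nat.coprime_pow_right_iff (Nat.pos_of_ne_zero hk)]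

section CardGL

variable {n : Type*} [Fintype n] [DecidableEq n]

theorem card_GL_congr {R S : Type*} [Semiring R] [Semiring S] (e : R ≃+* S) :
    Nat.card (GL n R) = Nat.card (GL n S) :=
  Nat.card_congr (Units.mapEquiv e.mapMatrix.toMulEquiv).toEquiv

noncomputable def Matrix.prodRingEquiv (R S : Type*) [Semiring R] [Semiring S] :
    Matrix n n (R × S) ≃+* Matrix n n R × Matrix n n S :=
  RingEquiv.ofBijective ((RingHom.fst R S).mapMatrix.prod (RingHom.snd R S).mapMatrix)
    ⟨fun M N h => by
      ext i j
      · exact congrFun (congrFun (congrArg Prod.fst h) i) j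
      · exact congrFun (congrFun (congrArg Prod.snd h) i) j,
     fun P => ⟨Matrix.of fun i j => (P.1 i j, P.2 i j), rfl⟩⟩

theorem card_GL_prod (R S : Type*) [Semiring R] [Semiring S] :
    Nat.card (GL n (R × S)) = Nat.card (GL n R) * Nat.card (GL n S) := by
  rw [Nat.card_congr ((Units.mapEquiv (Matrix.prodRingEquiv R S).toMulEquiv).trans
    MulEquiv.prodUnits).toEquiv, Nat.card_prod]

theorem card_scalarSubgroup [Nonempty n] (R : Type*) [CommRing R] :
    Nat.card (scalarSubgroup n R) = Nat.card Rˣ := by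
  have hinj : Function.Injective (Units.map (scalar n).toMonoidHom : Rˣ →* GL n R) :=
    Units.map_injective fun _ _ h => scalar_inj.mp h
  exact (Nat.card_congr (MonoidHom.ofInjective hinj).toEquiv).symm

end CardGL

theorem card_GL_field_eq (𝔽 : Type*) [Field 𝔽] [Fintype 𝔽] (r : ℕ) :
    (Nat.card (GL (Fin r) 𝔽) : ℚ) =
      (Fintype.card 𝔽 : ℚ) ^ (r ^ 2) * ∏ i ∈ Icc 1 r, (1 - (Fintype.card 𝔽 : ℚ)⁻¹ ^ i) := by
  set q := Fintype.card 𝔽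
  have hq : (q : ℚ) ≠ 0 := by simp [q, Fintype.card_ne_zero]
  have hfactor : ∀ i ∈ range r,
      ((q ^ r - q ^ i : ℕ) : ℚ) = (q : ℚ) ^ r * (1 - (q : ℚ)⁻¹ ^ (r - i)) := by
    intro i hi
    have hir : i ≤ r := (mem_range.1 hi).le
    rw [Nat.cast_sub (Nat.pow_le_pow_right Fintype.card_pos hir), mul_sub, mul_one, inv_pow,
      ← pow_sub₀ _ hq (Nat.sub_le r i), Nat.sub_sub_self hir]
    push_cast
    rfl
  rw [card_GL_field, Nat.cast_prod,
    Fin.prod_univ_eq_prod_range (fun i => ((q ^ r - q ^ i : ℕ) : ℚ)), prod_congr rfl hfactor,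
    prod_mul_distrib, prod_const, card_range, ← pow_mul, ← sq,
    ← Nat.Ico_zero_eq_range, prod_Ico_reflect (fun j => 1 - (q : ℚ)⁻¹ ^ j) 0 r.le_succ,
    Nat.add_sub_cancel_left, Nat.sub_zero, Ico_add_one_right_eq_Icc]

theorem card_matrix_ZMod (r m : ℕ) :
    Nat.card (Matrix (Fin r) (Fin r) (ZMod m)) = m ^ (r ^ 2) := by
  simp [Matrix, Nat.card_fun, sq, pow_mul]

theorem card_GL_ZMod_primePow (r : ℕ) {p k : ℕ} (hp : p.Prime) (hk : k ≠ 0) :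
    (Nat.card (GL (Fin r) (ZMod (p ^ k))) : ℚ) =
      ((p : ℚ) ^ k) ^ (r ^ 2) * ∏ i ∈ Icc 1 r, (1 - (p : ℚ)⁻¹ ^ i) := by
  have : Fact p.Prime := ⟨hp⟩
  have := ZMod.isLocalHom_castHom_primePow hp hk
  let f : Matrix (Fin r) (Fin r) (ZMod (p ^ k)) →+* Matrix (Fin r) (Fin r) (ZMod p) :=
    (ZMod.castHom (dvd_pow_self p hk) (ZMod p)).mapMatrix
  have hf : Function.Surjective f :=
    (ZMod.ringHom_surjective (ZMod.castHom (dvd_pow_self p hk) (ZMod p))).comp_left.comp_left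
  have hcard := congrArg (Nat.cast : ℕ → ℚ) (card_units_mul_card_eq_of_surjective f hf)
  have hp0 : ((p : ℚ) ^ (r ^ 2)) ≠ 0 := pow_ne_zero _ (Nat.cast_ne_zero.2 hp.ne_zero)
  rw [Nat.cast_mul, Nat.cast_mul, card_matrix_ZMod, card_matrix_ZMod, card_GL_field_eq,
    ZMod.card] at hcard
  push_cast at hcard
  rw [← mul_left_inj' hp0, hcard]
  ring

theorem card_GL_ZMod (r : ℕ) {a : ℕ} (ha : a ≠ 0) :
    (Nat.card (GL (Fin r) (ZMod a)) : ℚ) =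
      (a : ℚ) ^ (r ^ 2) * ∏ p ∈ a.primeFactors, ∏ i ∈ Icc 1 r, (1 - (p : ℚ)⁻¹ ^ i) := by
  induction a using Nat.recOnPosPrimePosCoprime with
  | zero => exact absurd rfl ha
  | one => simp
  | prime_pow p k hp hk =>
    rw [card_GL_ZMod_primePow r hp hk.ne', Nat.primeFactors_prime_pow hk.ne' hp, prod_singleton]
    push_cast
    rfl
  | coprime m n hm hn hmn ihm ihn =>
    rw [card_GL_congr (ZMod.chineseRemainder hmn), card_GL_prod, Nat.cast_mul,
      ihm (by omega), ihn (by omega), hmn.primeFactors_mul,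
      prod_union hmn.disjoint_primeFactors]
    push_cast
    ring

/-- For `r ≥ 1` and `a ≥ 1`,
`|GL_r(ℤ/aℤ)| = φ(a) · a^(r²−1) · ∏_{p ∣ a prime} ∏_{i=2}^{r} (1 − p^(−i))` (in `ℚ`);
equivalently, the subgroup of scalar matrices of `GL_r(ℤ/aℤ)` has order `φ(a)` and the
quotient `PGL_r(ℤ/aℤ)` by the scalar matrices has order
`a^(r²−1) · ∏_{p ∣ a} ∏_{i=2}^{r} (1 − p^(−i))`. -/
theorem card_GL_and_PGL_ZMod (r a : ℕ) (hr : 1 ≤ r) (ha : 1 ≤ a) :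
    (Nat.card (Matrix.GeneralLinearGroup (Fin r) (ZMod a)) : ℚ) =
      (Nat.totient a : ℚ) * (a : ℚ) ^ (r ^ 2 - 1) *
        ∏ p ∈ a.primeFactors, ∏ i ∈ Finset.Icc 2 r, (1 - ((p : ℚ))⁻¹ ^ i) ∧
    Nat.card (scalarSubgroup (Fin r) (ZMod a)) = Nat.totient a ∧
    (Nat.card
        (Matrix.GeneralLinearGroup (Fin r) (ZMod a) ⧸ scalarSubgroup (Fin r) (ZMod a)) : ℚ) =
      (a : ℚ) ^ (r ^ 2 - 1) *
        ∏ p ∈ a.primeFactors, ∏ i ∈ Finset.Icc 2 r, (1 - ((p : ℚ))⁻¹ ^ i) := by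
  have : NeZero a := ⟨by omega⟩
  have : Nonempty (Fin r) := ⟨⟨0, hr⟩⟩
  have hsplit (p : ℕ) : ∏ i ∈ Icc 1 r, (1 - (p : ℚ)⁻¹ ^ i) =
      (1 - (p : ℚ)⁻¹) * ∏ i ∈ Icc 2 r, (1 - (p : ℚ)⁻¹ ^ i) := by
    rw [← Ico_add_one_right_eq_Icc, prod_eq_prod_Ico_succ_bot (by omega), pow_one,
      Ico_add_one_right_eq_Icc]
  have hGL : (Nat.card (GL (Fin r) (ZMod a)) : ℚ) =
      (Nat.totient a : ℚ) * (a : ℚ) ^ (r ^ 2 - 1) *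
        ∏ p ∈ a.primeFactors, ∏ i ∈ Icc 2 r, (1 - (p : ℚ)⁻¹ ^ i) := by
    rw [card_GL_ZMod r (NeZero.ne a), prod_congr rfl fun p _ => hsplit p, prod_mul_distrib,
      Nat.totient_eq_mul_prod_factors, ← pow_sub_one_mul (by positivity)]
    ring
  have hscalar : Nat.card (scalarSubgroup (Fin r) (ZMod a)) = a.totient := by
    rw [card_scalarSubgroup, Nat.card_eq_fintype_card, ZMod.card_units_eq_totient]
  refine ⟨hGL, hscalar, ?_⟩
  have hLagrange := congrArg (Nat.cast : ℕ → ℚ)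
    (Subgroup.card_eq_card_quotient_mul_card_subgroup (scalarSubgroup (Fin r) (ZMod a)))
  rw [hGL, hscalar, Nat.cast_mul] at hLagrange
  have htotient : (a.totient : ℚ) ≠ 0 := by exact_mod_cast (Nat.totient_pos.2 (by omega)).ne'
  apply mul_left_cancel₀ htotient
  linear_combination -hLagrange
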